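/- Let H₁, H be real Hilbert spaces, f : H₁ → (-∞, +∞] proper lower semicontinuous and μ-strongly convex (μ > 0), and L : H₁ → H a nonzero bounded linear operator. Then the map C : H → H defined by C(w) = L(∇f*(L* w)) is well-defined and (μ/‖L‖²)-cocoercive. -/
import Mathlib


open scoped RealInnerProductSpace

/-- If `fs` is the Fenchel conjugate of `f` (given as a pointwise LUB), `f` is lsc, and `fs`
has gradient `g` at `u`, then `u` is a subgradient of `f` at `g`. -/
private lemma subgrad_of_grad_conj {H₁ : Type*} [NormedAddCommGroup H₁]
    [InnerProductSpace ℝ H₁] [CompleteSpace H₁]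
    (f fs : H₁ → ℝ) (hlsc : LowerSemicontinuous f)
    (hfs : ∀ u : H₁, IsLUB {r : ℝ | ∃ x : H₁, r = ⟪x, u⟫ - f x} (fs u))
    (u g : H₁) (hg : HasGradientAt fs g u) :
    ∀ x : H₁, f g + ⟪u, x - g⟫ ≤ f x := by
  have FY : ∀ x v : H₁, ⟪x, v⟫ - f x ≤ fs v := fun x v => (hfs v).1 ⟨x, rfl⟩
  have attain : f g ≤ ⟪g, u⟫ - fs u := by
    by_contra hcon
    push_neg at hcon
    obtain ⟨c, hc1, hc2⟩ : ∃ c : ℝ, ⟪g, u⟫ - fs u < c ∧ c < f g :=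
      ⟨(⟪g, u⟫ - fs u + f g) / 2, by linarith, by linarith⟩
    obtain ⟨δ₀, hδ₀, hball⟩ := Metric.eventually_nhds_iff.1 (hlsc g c hc2)
    have key : ∀ ε : ℝ, 0 < ε → 2 * ε < δ₀ →
        c < ⟪g, u⟫ - fs u + ε * (2 * ‖u‖ + 1) := by
      intro ε hε hεδ
      have hlo := (hasGradientAt_iff_isLittleO.1 hg).def hε
      obtain ⟨δ₁, hδ₁, hgrad⟩ := Metric.eventually_nhds_iff.1 hlo
      set δ := min (δ₁ / 2) 1 with hδdef
      have hδpos : 0 < δ := lt_min (by linarith) one_pos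
      have hδ1 : δ < δ₁ := lt_of_le_of_lt (min_le_left _ _) (by linarith)
      have hδle1 : δ ≤ 1 := min_le_right _ _
      obtain ⟨r, ⟨x, rfl⟩, hx⟩ := (lt_isLUB_iff (hfs u)).1
        (show fs u - ε * δ < fs u by nlinarith)
      -- hx : fs u - ε * δ < ⟪x, u⟫ - f x
      have hxg : ‖x - g‖ ≤ 2 * ε := by
        rcases eq_or_ne x g with h | h
        · rw [h, sub_self, norm_zero]; positivity
        have hd : 0 < ‖x - g‖ := norm_sub_pos_iff.2 h
        set v := u + (δ / ‖x - g‖) • (x - g) with hv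
        have hvu : v - u = (δ / ‖x - g‖) • (x - g) := by rw [hv]; abel
        have hvnorm : ‖v - u‖ = δ := by
          rw [hvu, norm_smul, Real.norm_eq_abs, abs_of_pos (by positivity)]
          field_simp
        have h1 : ⟪x, v⟫ - f x ≤ fs v := FY x v
        have h2 : ‖fs v - fs u - ⟪g, v - u⟫‖ ≤ ε * ‖v - u‖ :=
          hgrad (by rw [dist_eq_norm, hvnorm]; linarith)
        rw [hvnorm, Real.norm_eq_abs] at h2
        have h2' : fs v - fs u - ⟪g, v - u⟫ ≤ ε * δ := (abs_le.1 h2).2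
        have hinner : ⟪x, v⟫ = ⟪x, u⟫ + (δ / ‖x - g‖) * ⟪x, x - g⟫ := by
          rw [hv, inner_add_right, real_inner_smul_right]
        have hinner2 : ⟪g, v - u⟫ = (δ / ‖x - g‖) * ⟪g, x - g⟫ := by
          rw [hvu, real_inner_smul_right]
        have hcomb : fs u - ε * δ + (δ / ‖x - g‖) * ⟪x, x - g⟫
            < fs u + (δ / ‖x - g‖) * ⟪g, x - g⟫ + ε * δ := by
          calc fs u - ε * δ + (δ / ‖x - g‖) * ⟪x, x - g⟫
              < (⟪x, u⟫ - f x) + (δ / ‖x - g‖) * ⟪x, x - g⟫ := by linarith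
            _ = ⟪x, v⟫ - f x := by rw [hinner]; ring
            _ ≤ fs v := h1
            _ ≤ fs u + (δ / ‖x - g‖) * ⟪g, x - g⟫ + ε * δ := by
                rw [← hinner2]; linarith
        have hdd : (δ / ‖x - g‖) * ⟪x - g, x - g⟫ < 2 * ε * δ := by
          have hsplit : ⟪x - g, x - g⟫ = ⟪x, x - g⟫ - ⟪g, x - g⟫ := inner_sub_left _ _ _
          rw [hsplit, mul_sub]
          linarith
        rw [real_inner_self_eq_norm_sq] at hdd
        have heq : (δ / ‖x - g‖) * ‖x - g‖ ^ 2 = δ * ‖x - g‖ := by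
          field_simp
        rw [heq] at hdd
        have : δ * ‖x - g‖ < δ * (2 * ε) := by linarith
        exact le_of_lt ((mul_lt_mul_iff_right₀ hδpos).1 this)
      have hcf : c < f x := hball (by rw [dist_eq_norm]; linarith)
      have hfx : f x < ⟪x, u⟫ - fs u + ε * δ := by linarith
      have hxu : ⟪x, u⟫ ≤ ⟪g, u⟫ + 2 * ε * ‖u‖ := by
        have hdiff : ⟪x, u⟫ - ⟪g, u⟫ = ⟪x - g, u⟫ := (inner_sub_left _ _ _).symm
        have habs : |⟪x - g, u⟫| ≤ ‖x - g‖ * ‖u‖ := abs_real_inner_le_norm _ _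
        have hle : ⟪x - g, u⟫ ≤ 2 * ε * ‖u‖ :=
          le_trans (le_abs_self _)
            (le_trans habs (mul_le_mul_of_nonneg_right hxg (norm_nonneg _)))
        linarith
      have hεδ2 : ε * δ ≤ ε * 1 := mul_le_mul_of_nonneg_left hδle1 hε.le
      calc c < f x := hcf
        _ < ⟪x, u⟫ - fs u + ε * δ := hfx
        _ ≤ ⟪g, u⟫ - fs u + ε * (2 * ‖u‖ + 1) := by nlinarith
    have hMpos : (0:ℝ) < 2 * ‖u‖ + 1 := by positivity
    obtain ⟨ε, hεpos, h2ε, hεM⟩ : ∃ ε : ℝ, 0 < ε ∧ 2 * ε < δ₀ ∧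
        ε * (2 * ‖u‖ + 1) ≤ (c - (⟪g, u⟫ - fs u)) / 2 := by
      refine ⟨min ((c - (⟪g, u⟫ - fs u)) / (2 * (2 * ‖u‖ + 1))) (δ₀ / 4),
        lt_min (div_pos (by linarith) (by positivity)) (by linarith), ?_, ?_⟩
      · have h1 : min ((c - (⟪g, u⟫ - fs u)) / (2 * (2 * ‖u‖ + 1))) (δ₀ / 4) ≤ δ₀ / 4 :=
          min_le_right _ _
        linarith
      · have h1 : min ((c - (⟪g, u⟫ - fs u)) / (2 * (2 * ‖u‖ + 1))) (δ₀ / 4)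
            ≤ (c - (⟪g, u⟫ - fs u)) / (2 * (2 * ‖u‖ + 1)) := min_le_left _ _
        have h2 := mul_le_mul_of_nonneg_right h1 hMpos.le
        calc min ((c - (⟪g, u⟫ - fs u)) / (2 * (2 * ‖u‖ + 1))) (δ₀ / 4) * (2 * ‖u‖ + 1)
            ≤ (c - (⟪g, u⟫ - fs u)) / (2 * (2 * ‖u‖ + 1)) * (2 * ‖u‖ + 1) := h2
          _ = (c - (⟪g, u⟫ - fs u)) / 2 := by field_simp
    have hkey := key ε hεpos h2ε
    linarith
  intro x
  have hFY := FY x u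
  have hsym : ⟪u, x - g⟫ = ⟪x, u⟫ - ⟪g, u⟫ := by
    rw [real_inner_comm, inner_sub_left]
  linarith

/-- Strong monotonicity of subgradients of a strongly convex function. -/
private lemma strong_mono_of_subgrad {H₁ : Type*} [NormedAddCommGroup H₁]
    [InnerProductSpace ℝ H₁]
    (f : H₁ → ℝ) (μ : ℝ) (hsc : StrongConvexOn Set.univ μ f)
    (x₁ x₂ u₁ u₂ : H₁)
    (h₁ : ∀ y, f x₁ + ⟪u₁, y - x₁⟫ ≤ f y)
    (h₂ : ∀ y, f x₂ + ⟪u₂, y - x₂⟫ ≤ f y) :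
    μ * ‖x₁ - x₂‖ ^ 2 ≤ ⟪u₁ - u₂, x₁ - x₂⟫ := by
  have improved : ∀ x u : H₁, (∀ y, f x + ⟪u, y - x⟫ ≤ f y) →
      ∀ y, f x + ⟪u, y - x⟫ + μ / 2 * ‖x - y‖ ^ 2 ≤ f y := by
    intro x u hu y
    have step : ∀ t : ℝ, t ∈ Set.Ioo (0 : ℝ) 1 →
        f x + ⟪u, y - x⟫ + μ / 2 * ((1 - t) * ‖x - y‖ ^ 2) ≤ f y := by
      intro t ht
      have hcv := hsc.2 (Set.mem_univ x) (Set.mem_univ y)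
        (show (0:ℝ) ≤ 1 - t by linarith [ht.2]) ht.1.le (show (1 - t) + t = 1 by ring)
      simp only [smul_eq_mul] at hcv
      have hsub := hu ((1 - t) • x + t • y)
      have harg : (1 - t) • x + t • y - x = t • (y - x) := by
        rw [sub_smul, one_smul, smul_sub]; abel
      rw [harg, real_inner_smul_right] at hsub
      have hA : t * (f x + ⟪u, y - x⟫ + μ / 2 * ((1 - t) * ‖x - y‖ ^ 2) - f y) ≤ 0 := by
        have hc : t * (f x + ⟪u, y - x⟫ + μ / 2 * ((1 - t) * ‖x - y‖ ^ 2) - f y)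
            = (f x + t * ⟪u, y - x⟫)
              - ((1 - t) * f x + t * f y - (1 - t) * t * (μ / 2 * ‖x - y‖ ^ 2)) := by
          ring
        rw [hc]
        linarith
      nlinarith [ht.1, hA]
    have htend : Filter.Tendsto
        (fun t : ℝ => f x + ⟪u, y - x⟫ + μ / 2 * ((1 - t) * ‖x - y‖ ^ 2))
        (nhdsWithin 0 (Set.Ioi 0))
        (nhds (f x + ⟪u, y - x⟫ + μ / 2 * ((1 - (0:ℝ)) * ‖x - y‖ ^ 2))) := by
      apply Filter.Tendsto.mono_left _ nhdsWithin_le_nhds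
      exact (by fun_prop : Continuous
        (fun t : ℝ => f x + ⟪u, y - x⟫ + μ / 2 * ((1 - t) * ‖x - y‖ ^ 2))).tendsto 0
    have hev : ∀ᶠ t in nhdsWithin (0:ℝ) (Set.Ioi 0),
        f x + ⟪u, y - x⟫ + μ / 2 * ((1 - t) * ‖x - y‖ ^ 2) ≤ f y :=
      Filter.eventually_of_mem (Ioo_mem_nhdsGT_of_mem ⟨le_refl 0, one_pos⟩) step
    have := le_of_tendsto htend hev
    simpa using this
  have I1 := improved x₁ u₁ h₁ x₂
  have I2 := improved x₂ u₂ h₂ x₁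
  have e1 : ⟪u₁ - u₂, x₁ - x₂⟫ = ⟪u₁, x₁ - x₂⟫ - ⟪u₂, x₁ - x₂⟫ := inner_sub_left _ _ _
  have e2 : ⟪u₁, x₂ - x₁⟫ = -⟪u₁, x₁ - x₂⟫ := by
    rw [← inner_neg_right]; congr 1; abel
  have e3 : ‖x₂ - x₁‖ = ‖x₁ - x₂‖ := norm_sub_rev _ _
  rw [e2] at I1
  rw [e3] at I2
  linarith

/-- `C w = L (∇f*(L* w))` is `(μ/‖L‖²)`-cocoercive when `f` is `μ`-strongly
convex, proper and lsc, and `L` is a nonzero bounded linear operator. -/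
theorem composition_with_gradient_of_conjugate_cocoercive
    {H₁ H : Type*} [NormedAddCommGroup H₁] [InnerProductSpace ℝ H₁] [CompleteSpace H₁]
    [NormedAddCommGroup H] [InnerProductSpace ℝ H] [CompleteSpace H]
    (f : H₁ → ℝ) (μ : ℝ) (hμ : 0 < μ)
    (hconv : ConvexOn ℝ Set.univ f) (hlsc : LowerSemicontinuous f)
    (hsc : StrongConvexOn Set.univ μ f)
    (L : H₁ →L[ℝ] H) (hL : L ≠ 0)
    (fs : H₁ → ℝ)
    (hfs : ∀ u : H₁, IsLUB {r : ℝ | ∃ x : H₁, r = ⟪x, u⟫ - f x} (fs u))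
    (G : H₁ → H₁) (hG : ∀ u : H₁, HasGradientAt fs (G u) u) :
    ∀ w₁ w₂ : H,
      (μ / ‖L‖ ^ 2) *
          ‖L (G (ContinuousLinearMap.adjoint L w₁)) - L (G (ContinuousLinearMap.adjoint L w₂))‖ ^ 2
        ≤ ⟪w₁ - w₂,
            L (G (ContinuousLinearMap.adjoint L w₁)) - L (G (ContinuousLinearMap.adjoint L w₂))⟫ := by
  intro w₁ w₂
  set u₁ := ContinuousLinearMap.adjoint L w₁ with hu₁
  set u₂ := ContinuousLinearMap.adjoint L w₂ with hu₂
  set x₁ := G u₁ with hx₁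
  set x₂ := G u₂ with hx₂
  have h₁ := subgrad_of_grad_conj f fs hlsc hfs u₁ x₁ (hG u₁)
  have h₂ := subgrad_of_grad_conj f fs hlsc hfs u₂ x₂ (hG u₂)
  have hmono := strong_mono_of_subgrad f μ hsc x₁ x₂ u₁ u₂ h₁ h₂
  have hadj : ⟪u₁ - u₂, x₁ - x₂⟫ = ⟪w₁ - w₂, L x₁ - L x₂⟫ := by
    rw [hu₁, hu₂, ← map_sub, ← map_sub]
    exact ContinuousLinearMap.adjoint_inner_left L (x₁ - x₂) (w₁ - w₂)
  have hLnorm : ‖L x₁ - L x₂‖ ≤ ‖L‖ * ‖x₁ - x₂‖ := by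
    rw [← map_sub]; exact L.le_opNorm _
  have hLpos : 0 < ‖L‖ := norm_pos_iff.2 hL
  calc (μ / ‖L‖ ^ 2) * ‖L x₁ - L x₂‖ ^ 2
      ≤ (μ / ‖L‖ ^ 2) * (‖L‖ * ‖x₁ - x₂‖) ^ 2 := by
        apply mul_le_mul_of_nonneg_left _ (div_nonneg hμ.le (by positivity))
        exact pow_le_pow_left₀ (norm_nonneg _) hLnorm 2
    _ = μ * ‖x₁ - x₂‖ ^ 2 := by
        field_simp
    _ ≤ ⟪u₁ - u₂, x₁ - x₂⟫ := hmono
    _ = ⟪w₁ - w₂, L x₁ - L x₂⟫ := hadj
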